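/- arXiv:1910.06173 — 7 statements merged into one kernel-verified Lean document; each statement's English description precedes it below -/
import Mathlib

section
/- Let R be a ring and let L and M be uniform R-modules, both of finite length n. If there exist R-module homomorphisms f: L → M and g: M → L and a nonzero element x ∈ L with (g ∘ f)(x) = x, then L and M are isomorphic. -/
/-- A module is *uniform* if any two nonzero submodules intersect nontrivially. -/
def IsUniformModule (R M : Type*) [Ring R] [AddCommGroup M] [Module R M] : Prop :=
  ∀ N P : Submodule R M, N ≠ ⊥ → P ≠ ⊥ → N ⊓ P ≠ ⊥

/-- A module has (composition) length `n` if it admits a composition series from `⊥` to `⊤`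
with `n` steps. -/
def HasLength (R M : Type*) [Ring R] [AddCommGroup M] [Module R M] (n : ℕ) : Prop :=
  ∃ s : CompositionSeries (Submodule R M), s.head = ⊥ ∧ s.last = ⊤ ∧ s.length = n

/-! In a uniform module an endomorphism with a nonzero fixed point is injective, because its
kernel meets its fixed-point submodule trivially. So `g ∘ f` is injective, hence bijective as `L`
has finite length; thus `g` is surjective. Likewise `f ∘ g` fixes `f x ≠ 0`, so it is injective,
and so is `g`. -/

section

variable {R M : Type*} [Ring R] [AddCommGroup M] [Module R M]

theorem LinearMap.ker_inf_ker_sub_id_eq_bot (φ : M →ₗ[R] M) :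
    LinearMap.ker φ ⊓ LinearMap.ker (φ - LinearMap.id) = ⊥ := by
  refine eq_bot_iff.mpr fun y hy => ?_
  obtain ⟨hy₀, hy₁⟩ := Submodule.mem_inf.mp hy
  rw [LinearMap.mem_ker] at hy₀
  rw [LinearMap.mem_ker, LinearMap.sub_apply, LinearMap.id_apply, hy₀, zero_sub, neg_eq_zero]
    at hy₁
  exact (Submodule.mem_bot R).mpr hy₁

theorem IsUniformModule.injective_of_apply_eq_self (hM : IsUniformModule R M)
    (φ : M →ₗ[R] M) {x : M} (hx : x ≠ 0) (hφx : φ x = x) : Function.Injective φ := by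
  rw [← LinearMap.ker_eq_bot]
  by_contra hker
  have hfix : LinearMap.ker (φ - LinearMap.id) ≠ ⊥ :=
    (Submodule.ne_bot_iff _).mpr ⟨x, by simp [hφx], hx⟩
  exact hM _ _ hker hfix φ.ker_inf_ker_sub_id_eq_bot

theorem HasLength.isArtinian {n : ℕ} (h : HasLength R M n) : IsArtinian R M :=
  let ⟨s, hhead, hlast, _⟩ := h
  (isFiniteLength_iff_isNoetherian_isArtinian.mp
    (isFiniteLength_iff_exists_compositionSeries.mpr ⟨s, hhead, hlast⟩)).2

end

theorem iso_of_comp_fixed_point_general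
    {R L M : Type*} [Ring R] [AddCommGroup L] [Module R L] [AddCommGroup M] [Module R M]
    (n : ℕ) (hLlen : HasLength R L n)
    (hL : IsUniformModule R L) (hM : IsUniformModule R M)
    (f : L →ₗ[R] M) (g : M →ₗ[R] L) (x : L) (hx : x ≠ 0) (hfix : g (f x) = x) :
    Nonempty (L ≃ₗ[R] M) := by
  have := hLlen.isArtinian
  have hgf_inj : Function.Injective (g ∘ₗ f) := hL.injective_of_apply_eq_self _ hx hfix
  have hg_surj : Function.Surjective g :=
    .of_comp (IsArtinian.surjective_of_injective_endomorphism _ hgf_inj)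
  have hfx : f x ≠ 0 := fun h => hx (by rw [← hfix, h, map_zero])
  have hfg_inj : Function.Injective (f ∘ g) :=
    hM.injective_of_apply_eq_self (f ∘ₗ g) hfx (congrArg f hfix)
  exact ⟨(LinearEquiv.ofBijective g ⟨hfg_inj.of_comp, hg_surj⟩).symm⟩

theorem iso_of_comp_fixed_point
    {R L M : Type*} [Ring R] [AddCommGroup L] [Module R L] [AddCommGroup M] [Module R M]
    (n : ℕ) (hLlen : HasLength R L n) (hMlen : HasLength R M n)
    (hL : IsUniformModule R L) (hM : IsUniformModule R M)
    (f : L →ₗ[R] M) (g : M →ₗ[R] L) (x : L) (hx : x ≠ 0) (hfix : g (f x) = x) :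
    Nonempty (L ≃ₗ[R] M) :=
  iso_of_comp_fixed_point_general n hLlen hL hM f g x hx hfix
end

section
/- Let R be a ring and let L and M be uniform R-modules, both of finite length n. Suppose there exist n homomorphisms f₁: L → M, f₂: M → L, f₃: L → M, ..., alternating between Hom(L,M) and Hom(M,L), such that the composite fₙ ∘ ⋯ ∘ f₁ is nonzero. Then L is isomorphic to M. -/
/-- The composite `f_k ∘ ⋯ ∘ f₁` of an alternating sequence of maps
`f₁ : L → M`, `f₂ : M → L`, `f₃ : L → M`, … (the odd-indexed maps are taken from the
sequence `u`, the even-indexed ones from `v`).  The result lands in `L` or in `M`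
according to the parity of `k`, whence the sum type. -/
def altComp {R L M : Type*} [Ring R] [AddCommGroup L] [Module R L] [AddCommGroup M] [Module R M]
    (u : ℕ → (L →ₗ[R] M)) (v : ℕ → (M →ₗ[R] L)) : ℕ → ((L →ₗ[R] L) ⊕ (L →ₗ[R] M))
  | 0 => Sum.inl LinearMap.id
  | k + 1 =>
    match altComp u v k with
    | Sum.inl h => Sum.inr ((u k).comp h)
    | Sum.inr h => Sum.inl ((v k).comp h)

/-!
The kernels `K₀ ≤ K₁ ≤ ⋯ ≤ Kₙ` of the partial composites `f_k ∘ ⋯ ∘ f₁` are submodules of `L`,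
and `Kₙ ≠ L` since the full composite is nonzero. As `L` has length `n`, this chain cannot be
strictly increasing, so `K_k = K_{k+1}` for some `k < n`. Then `ker f_{k+1}` meets the nonzero
image of `f_k ∘ ⋯ ∘ f₁` trivially, so by uniformity `f_{k+1}` is injective; an injective map
between modules of the same finite length is an isomorphism.
-/

theorem Order.coe_le_height_of_lt_succ {α : Type*} [Preorder α] {f : ℕ → α} :
    ∀ {n : ℕ}, (∀ k < n, f k < f (k + 1)) → (n : ℕ∞) ≤ Order.height (f n)
  | 0, _ => by simp
  | n + 1, hf => calc
      ((n + 1 : ℕ) : ℕ∞) = n + 1 := by push_cast; rfl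
      _ ≤ Order.height (f n) + 1 :=
        add_le_add (coe_le_height_of_lt_succ fun k hk => hf k (by omega)) le_rfl
      _ ≤ Order.height (f (n + 1)) := Order.height_add_one_le (hf n n.lt_succ_self)

theorem Order.exists_succ_eq_of_height_top_le {α : Type*} [PartialOrder α] [OrderTop α]
    {n : ℕ} (htop : Order.height (⊤ : α) ≤ n) {f : ℕ → α} (hf : Monotone f) (hn : f n ≠ ⊤) :
    ∃ k < n, f (k + 1) = f k := by
  by_contra! hne
  have hchain : (n : ℕ∞) ≤ Order.height (f n) :=
    coe_le_height_of_lt_succ fun k hk => (hf k.le_succ).lt_of_ne (hne k hk).symm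
  have : (n : ℕ∞) + 1 ≤ n :=
    (add_le_add hchain le_rfl).trans ((height_add_one_le hn.lt_top).trans htop)
  exact absurd (by exact_mod_cast this : n + 1 ≤ n) (by omega)

theorem HasLength.length_eq {R M : Type*} [Ring R] [AddCommGroup M] [Module R M] {n : ℕ}
    (h : HasLength R M n) : Module.length R M = n := by
  obtain ⟨s, hhead, hlast, rfl⟩ := h
  exact (Module.length_compositionSeries s hhead hlast).symm

theorem LinearMap.surjective_of_injective_of_length_eq {R N M : Type*} [Ring R]
    [AddCommGroup N] [Module R N] [AddCommGroup M] [Module R M] {f : N →ₗ[R] M}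
    (hf : Function.Injective f) (hlen : Module.length R N = Module.length R M)
    (hfin : Module.length R M ≠ ⊤) : Function.Surjective f := by
  have : IsFiniteLength R M := Module.length_ne_top_iff.mp hfin
  obtain ⟨_, _⟩ := isFiniteLength_iff_isNoetherian_isArtinian.mp this
  rw [← LinearMap.range_eq_top (f := f)]
  by_contra hrange
  have := Submodule.length_lt hrange
  rw [← (LinearEquiv.ofInjective f hf).length_eq, hlen] at this
  exact this.false

theorem IsUniformModule.ker_eq_bot_of_ker_comp_le {R N M P : Type*} [Ring R]
    [AddCommGroup N] [Module R N] [AddCommGroup M] [Module R M] [AddCommGroup P] [Module R P]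
    (hM : IsUniformModule R M) {g : N →ₗ[R] M} {f : M →ₗ[R] P} (hg : g ≠ 0)
    (h : LinearMap.ker (f.comp g) ≤ LinearMap.ker g) : LinearMap.ker f = ⊥ := by
  by_contra hf
  refine hM _ (LinearMap.range g) hf (by rwa [Ne, LinearMap.range_eq_bot]) (eq_bot_iff.mpr ?_)
  rintro _ ⟨hx, y, rfl⟩
  exact (Submodule.mem_bot R).mpr (h hx)

section altComp

variable {R L M : Type*} [Ring R] [AddCommGroup L] [Module R L] [AddCommGroup M] [Module R M]
  (u : ℕ → (L →ₗ[R] M)) (v : ℕ → (M →ₗ[R] L))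

def altKer (k : ℕ) : Submodule R L :=
  (altComp u v k).elim LinearMap.ker LinearMap.ker

theorem altKer_monotone : Monotone (altKer u v) := by
  refine monotone_nat_of_le_succ fun k => ?_
  rcases hk : altComp u v k with g | g <;>
    simpa only [altKer, altComp, hk, Sum.elim_inl, Sum.elim_inr] using LinearMap.ker_le_ker_comp _ _

theorem altKer_ne_top_iff (k : ℕ) :
    altKer u v k ≠ ⊤ ↔ (altComp u v k).elim (· ≠ 0) (· ≠ 0) := by
  unfold altKer
  rcases altComp u v k with g | g <;> simp [LinearMap.ker_eq_top]

theorem injective_or_injective_of_altKer_succ_eq (hL : IsUniformModule R L)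
    (hM : IsUniformModule R M) {k : ℕ} (hk : altKer u v k ≠ ⊤)
    (h : altKer u v (k + 1) = altKer u v k) :
    Function.Injective (u k) ∨ Function.Injective (v k) := by
  rw [altKer_ne_top_iff] at hk
  rcases hg : altComp u v k with g | g <;>
    simp only [altKer, altComp, hg, Sum.elim_inl, Sum.elim_inr] at hk h
  · exact .inl (LinearMap.ker_eq_bot.mp (hL.ker_eq_bot_of_ker_comp_le hk h.le))
  · exact .inr (LinearMap.ker_eq_bot.mp (hM.ker_eq_bot_of_ker_comp_le hk h.le))

end altComp

theorem iso_of_alternating_comp_ne_zero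
    {R L M : Type*} [Ring R] [AddCommGroup L] [Module R L] [AddCommGroup M] [Module R M]
    (n : ℕ) (hLlen : HasLength R L n) (hMlen : HasLength R M n)
    (hL : IsUniformModule R L) (hM : IsUniformModule R M)
    (u : ℕ → (L →ₗ[R] M)) (v : ℕ → (M →ₗ[R] L))
    (hne : (altComp u v n).elim (· ≠ 0) (· ≠ 0)) :
    Nonempty (L ≃ₗ[R] M) := by
  have hLn := hLlen.length_eq
  have hMn := hMlen.length_eq
  have htop : Order.height (⊤ : Submodule R L) ≤ n := by
    rw [← Module.length_eq_height, hLn]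
  have hn : altKer u v n ≠ ⊤ := (altKer_ne_top_iff u v n).mpr hne
  obtain ⟨k, hk, heq⟩ := Order.exists_succ_eq_of_height_top_le htop (altKer_monotone u v) hn
  have hkne : altKer u v k ≠ ⊤ := ne_top_of_le_ne_top hn (altKer_monotone u v hk.le)
  rcases injective_or_injective_of_altKer_succ_eq u v hL hM hkne heq with hu | hv
  · exact ⟨.ofBijective (u k) ⟨hu, LinearMap.surjective_of_injective_of_length_eq hu
      (hLn.trans hMn.symm) (hMn ▸ ENat.natCast_ne_top n)⟩⟩
  · exact ⟨(LinearEquiv.ofBijective (v k) ⟨hv, LinearMap.surjective_of_injective_of_length_eq hv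
      (hMn.trans hLn.symm) (hLn ▸ ENat.natCast_ne_top n)⟩).symm⟩
end

section
/- Let R be a ring and let L and M be uniserial R-modules whose lattices of submodules are both order-isomorphic to ℕ ∪ {+∞} under reverse inclusion; i.e., the nonzero submodules of L form a strictly decreasing chain L = L₀ ⊃ L₁ ⊃ L₂ ⊃ ⋯ comprising all nonzero submodules, and similarly M = M₀ ⊃ M₁ ⊃ M₂ ⊃ ⋯. If there exist homomorphisms f: L → M, g: M → L and a nonzero x ∈ L with (g ∘ f)(x) = x, then f is an isomorphism L ≅ M. -/
/-- A module is *uniserial* if its submodules are totally ordered by inclusion. -/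
def IsUniserialModule (R M : Type*) [Ring R] [AddCommGroup M] [Module R M] : Prop :=
  ∀ N P : Submodule R M, N ≤ P ∨ P ≤ N

/-- The nonzero submodules of `M` form a strictly decreasing chain
`M = M₀ ⊃ M₁ ⊃ M₂ ⊃ ⋯` comprising *all* the nonzero submodules; i.e. the submodule
lattice is order-isomorphic to `ℕ ∪ {+∞}` under reverse inclusion. -/
def HasCoNatChain (R M : Type*) [Ring R] [AddCommGroup M] [Module R M] : Prop :=
  ∃ c : ℕ → Submodule R M, StrictAnti c ∧ c 0 = ⊤ ∧
    (∀ N : Submodule R M, N ≠ ⊥ ↔ ∃ n, N = c n)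

/-!
Both `f` and `g` are injective: a uniserial module is uniform, and `ker f` meets `R x`
trivially. The image of the `n`-th member of the chain of `L` under an injective map then lies
`n` steps below the image of `L`, and likewise for `M`. If `f` were not onto, `f L ⊆ M₁`, so
`g f` would push `R x = Lᵢ` into `Lᵢ₊₁`; but `g f` fixes `x`.
-/

section

variable {R L M : Type*} [Ring R] [AddCommGroup L] [Module R L] [AddCommGroup M] [Module R M]

theorem IsUniserialModule.eq_bot_or_eq_bot_of_inf_eq_bot (hM : IsUniserialModule R M)
    {N P : Submodule R M} (h : N ⊓ P = ⊥) : N = ⊥ ∨ P = ⊥ := by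
  rcases hM N P with hle | hle
  · exact .inl (by rwa [inf_eq_left.mpr hle] at h)
  · exact .inr (by rwa [inf_eq_right.mpr hle] at h)

theorem IsUniserialModule.injective_of_apply_apply_eq_self (hL : IsUniserialModule R L)
    {f : L →ₗ[R] M} {g : M →ₗ[R] L} {x : L} (hx : x ≠ 0) (hfix : g (f x) = x) :
    Function.Injective f := by
  have hdisj : LinearMap.ker f ⊓ Submodule.span R {x} = ⊥ := by
    refine (Submodule.eq_bot_iff _).mpr fun y ⟨hyker, hyx⟩ => ?_
    obtain ⟨r, rfl⟩ := Submodule.mem_span_singleton.mp hyx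
    rw [← hfix, ← map_smul, ← map_smul, LinearMap.mem_ker.mp hyker, map_zero]
  rcases hL.eq_bot_or_eq_bot_of_inf_eq_bot hdisj with hker | hspan
  · exact LinearMap.ker_eq_bot.mp hker
  · exact absurd (Submodule.span_singleton_eq_bot.mp hspan) hx

variable {c : ℕ → Submodule R L} {d : ℕ → Submodule R M}

theorem le_succ_of_lt_of_forall_ne_bot (hd : StrictAnti d)
    (hdN : ∀ N : Submodule R M, N ≠ ⊥ → ∃ n, N = d n) {N : Submodule R M} {n : ℕ}
    (hN : N < d n) : N ≤ d (n + 1) := by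
  by_cases hbot : N = ⊥
  · exact hbot ▸ bot_le
  obtain ⟨m, rfl⟩ := hdN N hbot
  exact hd.antitone (hd.lt_iff_gt.mp hN)

theorem map_le_add_of_injective (hc : StrictAnti c) (hd : StrictAnti d)
    (hdN : ∀ N : Submodule R M, N ≠ ⊥ → ∃ n, N = d n) {f : L →ₗ[R] M}
    (hf : Function.Injective f) {k : ℕ} (hk : (c 0).map f ≤ d k) (n : ℕ) :
    (c n).map f ≤ d (n + k) := by
  induction n with
  | zero => rwa [zero_add]
  | succ n ih =>
    have hlt : (c (n + 1)).map f < (c n).map f :=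
      Submodule.map_strictMono_of_injective hf (hc n.lt_succ_self)
    rw [Nat.add_right_comm]
    exact le_succ_of_lt_of_forall_ne_bot hd hdN (hlt.trans_le ih)

end

theorem bijective_of_fixed_point_of_coNatChain
    {R L M : Type*} [Ring R] [AddCommGroup L] [Module R L] [AddCommGroup M] [Module R M]
    (hL : IsUniserialModule R L) (hM : IsUniserialModule R M)
    (hLc : HasCoNatChain R L) (hMc : HasCoNatChain R M)
    (f : L →ₗ[R] M) (g : M →ₗ[R] L) (x : L) (hx : x ≠ 0) (hfix : g (f x) = x) :
    Function.Bijective f := by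
  obtain ⟨c, hc, hc0, hcN⟩ := hLc
  obtain ⟨d, hd, hd0, hdN⟩ := hMc
  have hf : Function.Injective f := hL.injective_of_apply_apply_eq_self hx hfix
  have hfx : f x ≠ 0 := fun h => hx (by rw [← hfix, h, map_zero])
  have hg : Function.Injective g := hM.injective_of_apply_apply_eq_self hfx (by rw [hfix])
  refine ⟨hf, LinearMap.range_eq_top.mp ?_⟩
  by_contra hrange
  obtain ⟨i, hi⟩ := (hcN _).mp ((Submodule.span_singleton_eq_bot.not).mpr hx)
  have hfL : (c 0).map f ≤ d 1 := by
    rw [hc0, Submodule.map_top]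
    exact le_succ_of_lt_of_forall_ne_bot hd (fun N => (hdN N).mp)
      (hd0 ▸ lt_top_iff_ne_top.mpr hrange)
  have hfi := map_le_add_of_injective hc hd (fun N => (hdN N).mp) hf hfL i
  have hgi := map_le_add_of_injective hd hc (fun N => (hcN N).mp) hg (k := 0)
    (hc0 ▸ le_top) (i + 1)
  have hxi : x ∈ c i := hi ▸ Submodule.mem_span_singleton_self x
  have hxi' : x ∈ c (i + 1) :=
    hfix ▸ hgi (Submodule.mem_map_of_mem (hfi (Submodule.mem_map_of_mem hxi)))
  have hle : c i ≤ c (i + 1) := hi ▸ (Submodule.span_singleton_le_iff_mem x _).mpr hxi'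
  exact absurd (hc.le_iff_ge.mp hle) (by omega)
end

section
/- Let K be a field, and let A = K⟨a,b⟩/(a², b², ab, ba) be the K-algebra with two generators a, b subject to a² = b² = ab = ba = 0. For n ≥ 2, consider the two n-dimensional A-modules V and W with bases v₁,…,vₙ and w₁,…,wₙ where a·vᵢ = v_{i+1} and a·wᵢ = w_{i+1} for i < n (and a·vₙ = a·wₙ = 0), b·v₁ = vₙ, b·vᵢ = 0 for i > 1, and b·wᵢ = 0 for all i. Then V and W are both uniserial of length n, but V ≇ W. -/
/-!
Write `T i` for the span of the basis vectors with index `≥ i`. Since `a` shifts the basis, an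
`a`-stable subspace containing a vector whose leading index is `i` contains `T i` (apply `a` to
reach `T (i + 1)` by downward induction, then peel off the leading term); hence the `a`-stable
subspaces are exactly the `T i`, a chain. When `b` also preserves every `T i`, the `T i` are
`A`-submodules and `T n < ⋯ < T 0` is a composition series. Finally `b` kills `W` but not `v₁`.
-/

namespace Module.Basis

section TailSpan

variable {K M : Type*} [Field K] [AddCommGroup M] [Module K M] {n : ℕ}
  (v : Basis (Fin n) K M)

def tailSpan (i : ℕ) : Submodule K M :=
  Submodule.span K (v '' {m | i ≤ (m : ℕ)})

theorem tailSpan_antitone : Antitone v.tailSpan :=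
  fun _ _ hij ↦ Submodule.span_mono (Set.image_mono fun _ hm ↦ le_trans hij hm)

theorem apply_mem_tailSpan_iff {i : ℕ} {m : Fin n} : v m ∈ v.tailSpan i ↔ i ≤ m := by
  simp [tailSpan, mem_span_image]

theorem tailSpan_zero : v.tailSpan 0 = ⊤ := by
  simp [tailSpan, Set.image_univ, v.span_eq]

theorem tailSpan_of_le {i : ℕ} (hi : n ≤ i) : v.tailSpan i = ⊥ := by
  have : {m : Fin n | i ≤ (m : ℕ)} = ∅ := Set.eq_empty_of_forall_notMem fun m hm ↦ by
    have := m.isLt; simp_all only [Set.mem_ofPred_eq]; omega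
  simp [tailSpan, this]

theorem tailSpan_eq_span_singleton_sup {i : ℕ} (hi : i < n) :
    v.tailSpan i = K ∙ v ⟨i, hi⟩ ⊔ v.tailSpan (i + 1) := by
  have : {m : Fin n | i ≤ (m : ℕ)} = insert (⟨i, hi⟩ : Fin n) {m : Fin n | i + 1 ≤ (m : ℕ)} := by
    ext m; simp only [Set.mem_insert_iff, Set.mem_ofPred_eq, Fin.ext_iff]; omega
  rw [tailSpan, this, Set.image_insert_eq, Submodule.span_insert, tailSpan]

theorem tailSpan_succ_covBy {i : ℕ} (hi : i < n) : v.tailSpan (i + 1) ⋖ v.tailSpan i := by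
  rw [v.tailSpan_eq_span_singleton_sup hi]
  exact Submodule.covBy_span_singleton_sup (by simp [apply_mem_tailSpan_iff])

theorem tailSpan_le_comap {i j : ℕ} (g : M →ₗ[K] M)
    (hg : ∀ m : Fin n, i ≤ m → g (v m) ∈ v.tailSpan j) :
    v.tailSpan i ≤ (v.tailSpan j).comap g :=
  Submodule.span_le.2 <| Set.image_subset_iff.2 hg

end TailSpan

section Shift

variable {K M : Type*} [Field K] [AddCommGroup M] [Module K M] {n : ℕ}
  {v : Basis (Fin n) K M} {f : M →ₗ[K] M}
  (hf : ∀ m : Fin n, f (v m) = if h : (m : ℕ) + 1 < n then v ⟨m + 1, h⟩ else 0)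
include hf

theorem tailSpan_le_comap_succ (i : ℕ) : v.tailSpan i ≤ (v.tailSpan (i + 1)).comap f :=
  v.tailSpan_le_comap f fun m hm ↦ by
    rw [hf]
    split_ifs with h
    · exact v.apply_mem_tailSpan_iff.2 (by simp; omega)
    · exact zero_mem _

theorem tailSpan_le_of_mem {P : Submodule K M} (hP : P ≤ P.comap f) {i : ℕ} {x : M}
    (hxP : x ∈ P) (hx : x ∈ v.tailSpan i) (hx' : x ∉ v.tailSpan (i + 1)) :
    v.tailSpan i ≤ P := by
  induction hk : n - i generalizing i x with
  | zero =>
    rw [v.tailSpan_of_le (by omega)] at hx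
    rw [v.tailSpan_of_le (by omega)] at hx'
    exact absurd hx hx'
  | succ k ih =>
    have hi : i < n := by omega
    rw [v.tailSpan_eq_span_singleton_sup hi]
    obtain ⟨_, hz, y, hy, rfl⟩ :=
      Submodule.mem_sup.1 ((v.tailSpan_eq_span_singleton_sup hi).le hx)
    obtain ⟨c, rfl⟩ := Submodule.mem_span_singleton.1 hz
    have hc : c ≠ 0 := by rintro rfl; simp_all
    have htail : v.tailSpan (i + 1) ≤ P := by
      by_cases hi' : i + 1 < n
      · refine ih (hP hxP) (tailSpan_le_comap_succ hf i hx) (fun hfx ↦ ?_) (by omega)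
        -- `f x = c • v (i + 1) + f y` with `f y ∈ T (i + 2)`: the leading index moves to `i + 1`
        have hcv : c • v ⟨i + 1, hi'⟩ ∈ v.tailSpan (i + 1 + 1) := by
          have := sub_mem hfx (tailSpan_le_comap_succ hf (i + 1) hy)
          rwa [map_add, add_sub_cancel_right, map_smul, hf, dif_pos hi'] at this
        exact absurd ((Submodule.smul_mem_iff _ hc).1 hcv) (by simp [apply_mem_tailSpan_iff])
      · rw [v.tailSpan_of_le (by omega)]
        exact bot_le
    have hvi : v ⟨i, hi⟩ ∈ P :=
      (Submodule.smul_mem_iff _ hc).1 (by simpa using sub_mem hxP (htail hy))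
    exact sup_le ((Submodule.span_singleton_le_iff_mem _ _).2 hvi) htail

theorem exists_eq_tailSpan {P : Submodule K M} (hP : P ≤ P.comap f) : ∃ i, P = v.tailSpan i := by
  suffices ∀ i, P ≤ v.tailSpan i → ∃ j, P = v.tailSpan j from this 0 (by simp [tailSpan_zero])
  intro i hPi
  induction hk : n - i generalizing i with
  | zero => exact ⟨i, le_antisymm hPi (by simp [v.tailSpan_of_le (by omega : n ≤ i)])⟩
  | succ k ih =>
    by_cases hP' : P ≤ v.tailSpan (i + 1)
    · exact ih (i + 1) hP' (by omega)
    · obtain ⟨x, hxP, hx'⟩ := SetLike.not_le_iff_exists.1 hP'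
      exact ⟨i, le_antisymm hPi (tailSpan_le_of_mem hf hP hxP (hPi hxP) hx')⟩

end Shift

end Module.Basis

section Algebra

variable {K A M : Type*} [Field K] [Ring A] [Algebra K A]
  [AddCommGroup M] [Module K M] [Module A M] [IsScalarTower K A M]

theorem Submodule.smul_mem_of_adjoin_eq_top {s : Set A} (hs : Algebra.adjoin K s = ⊤)
    {P : Submodule K M} (hP : ∀ r ∈ s, ∀ x ∈ P, r • x ∈ P) (r : A) {x : M} (hx : x ∈ P) :
    r • x ∈ P := by
  induction (hs ▸ Algebra.mem_top : r ∈ Algebra.adjoin K s) using Algebra.adjoin_induction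
    generalizing x with
  | mem r hr => exact hP r hr x hx
  | algebraMap c => rw [algebraMap_smul]; exact P.smul_mem c hx
  | add r s _ _ hr hs => rw [add_smul]; exact add_mem (hr hx) (hs hx)
  | mul r s _ _ hr hs => rw [mul_smul]; exact hr (hs hx)

variable {n : ℕ} {v : Module.Basis (Fin n) K M} {a : A}
  (hav : ∀ m : Fin n, a • v m = if h : (m : ℕ) + 1 < n then v ⟨m + 1, h⟩ else 0)
include hav

theorem isUniserialModule_of_shift : IsUniserialModule A M := by
  intro N P
  have hf : ∀ m : Fin n, DistribSMul.toLinearMap K M a (v m) = _ := hav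
  obtain ⟨i, hi⟩ := Module.Basis.exists_eq_tailSpan hf
    (P := N.restrictScalars K) fun _ hx ↦ N.smul_mem a hx
  obtain ⟨j, hj⟩ := Module.Basis.exists_eq_tailSpan hf
    (P := P.restrictScalars K) fun _ hx ↦ P.smul_mem a hx
  rcases le_total j i with h | h
  · left; rw [← Submodule.restrictScalars_le K, hi, hj]; exact v.tailSpan_antitone h
  · right; rw [← Submodule.restrictScalars_le K, hi, hj]; exact v.tailSpan_antitone h

theorem hasLength_of_shift {b : A} (hgen : Algebra.adjoin K {a, b} = ⊤)
    (hb : ∀ m : Fin n, b • v m ∈ v.tailSpan m) : HasLength A M n := by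
  have hT : ∀ i (r : A), ∀ x ∈ v.tailSpan i, r • x ∈ v.tailSpan i := by
    intro i
    refine Submodule.smul_mem_of_adjoin_eq_top hgen ?_
    rintro r (rfl | rfl) x hx
    · exact v.tailSpan_antitone (Nat.le_succ i)
        (Module.Basis.tailSpan_le_comap_succ (f := DistribSMul.toLinearMap K M r) hav i hx)
    · exact v.tailSpan_le_comap (DistribSMul.toLinearMap K M r)
        (fun m hm ↦ v.tailSpan_antitone hm (hb m)) hx
  let T : ℕ → Submodule A M := fun i ↦ { v.tailSpan i with smul_mem' := fun r _ ↦ hT i r _ }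
  have hT_covBy : ∀ i < n, T (i + 1) ⋖ T i := fun i hi ↦
    CovBy.of_image (Submodule.restrictScalarsEmbedding K A M) (v.tailSpan_succ_covBy hi)
  refine ⟨⟨n, fun j ↦ T (n - j), fun j ↦ ?_⟩, ?_, ?_, rfl⟩
  · show T (n - j.castSucc) ⋖ T (n - j.succ)
    rw [Fin.val_castSucc, Fin.val_succ, show n - j = n - (j + 1) + 1 by omega]
    exact hT_covBy _ (by omega)
  · show T (n - 0) = ⊥
    exact Submodule.restrictScalars_injective K A M (v.tailSpan_of_le le_rfl)
  · show T (n - n) = ⊤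
    rw [Nat.sub_self]
    exact Submodule.restrictScalars_injective K A M v.tailSpan_zero

end Algebra

theorem Module.Basis.smul_eq_zero_of_forall {K A M ι : Type*} [Field K] [Ring A] [Algebra K A]
    [AddCommGroup M] [Module K M] [Module A M] [IsScalarTower K A M] (w : Module.Basis ι K M)
    {b : A} (hb : ∀ i, b • w i = 0) (y : M) : b • y = 0 :=
  LinearMap.congr_fun (w.ext (f₁ := DistribSMul.toLinearMap K M b) (f₂ := 0) hb) y

/-- Over the algebra `A = K⟨a,b⟩/(a², b², ab, ba)`, the modules `V` (with `a·vᵢ = vᵢ₊₁`,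
`b·v₁ = vₙ`, `b·vᵢ = 0` for `i > 1`) and `W` (with `a·wᵢ = wᵢ₊₁`, `b·wᵢ = 0`) are
uniserial of length `n` but not isomorphic. -/
theorem uniserial_not_iso_two_loops
    {K A V W : Type*} [Field K] [Ring A] [Algebra K A]
    [AddCommGroup V] [Module K V] [Module A V] [IsScalarTower K A V]
    [AddCommGroup W] [Module K W] [Module A W] [IsScalarTower K A W]
    (a b : A)
    (hgen : Algebra.adjoin K {a, b} = ⊤)
    (n : ℕ) (hn : 2 ≤ n)
    (v : Module.Basis (Fin n) K V) (w : Module.Basis (Fin n) K W)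
    (hav : ∀ i : Fin n, a • v i = if h : (i : ℕ) + 1 < n then v ⟨(i : ℕ) + 1, h⟩ else 0)
    (haw : ∀ i : Fin n, a • w i = if h : (i : ℕ) + 1 < n then w ⟨(i : ℕ) + 1, h⟩ else 0)
    (hbv0 : b • v ⟨0, by omega⟩ = v ⟨n - 1, by omega⟩)
    (hbv : ∀ i : Fin n, (i : ℕ) ≠ 0 → b • v i = 0)
    (hbw : ∀ i : Fin n, b • w i = 0) :
    IsUniserialModule A V ∧ IsUniserialModule A W ∧
    HasLength A V n ∧ HasLength A W n ∧
    ¬ Nonempty (V ≃ₗ[A] W) := by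
  have hbV : ∀ i : Fin n, b • v i ∈ v.tailSpan i := fun i ↦
    if hi : (i : ℕ) = 0 then by simp [hi, v.tailSpan_zero] else by simp [hbv i hi]
  have hbW : ∀ i : Fin n, b • w i ∈ w.tailSpan i := fun i ↦ by simp [hbw i]
  refine ⟨isUniserialModule_of_shift hav, isUniserialModule_of_shift haw,
    hasLength_of_shift hav hgen hbV, hasLength_of_shift haw hgen hbW, ?_⟩
  rintro ⟨e⟩
  apply v.ne_zero ⟨n - 1, by omega⟩
  rw [← hbv0]
  apply e.injective
  rw [map_smul, w.smul_eq_zero_of_forall hbw, map_zero]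
end

section
/- Let C ⊆ D be a field extension and R = [[D, D], [0, C]]. For k ∈ D, let I_k be the left ideal R·[[1, k],[0, 0]] and let I_∞ = R·[[0, 1],[0, 0]] = [[0, D],[0, 0]]. Then for every λ ∈ D ∪ {∞}, the left ideal I_λ is a simple projective R-module, and all the I_λ are isomorphic to one another as R-modules. -/
open Matrix

/-- The triangular matrix ring `[[D, D], [0, C]]` as a `C`-subalgebra of `M₂(D)`. -/
def TriR (C D : Type*) [Field C] [Field D] [Algebra C D] :
    Subalgebra C (Matrix (Fin 2) (Fin 2) D) where
  carrier := {m | m 1 0 = 0 ∧ ∃ c : C, m 1 1 = algebraMap C D c}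
  add_mem' := by
    rintro a b ⟨ha1, ca, ha2⟩ ⟨hb1, cb, hb2⟩
    exact ⟨by simp [Matrix.add_apply, ha1, hb1], ca + cb, by simp [Matrix.add_apply, ha2, hb2]⟩
  zero_mem' := ⟨by simp, 0, by simp⟩
  mul_mem' := by
    rintro a b ⟨ha1, ca, ha2⟩ ⟨hb1, cb, hb2⟩
    constructor
    · simp [Matrix.mul_apply, Fin.sum_univ_two, ha1, hb1]
    · exact ⟨ca * cb, by simp [Matrix.mul_apply, Fin.sum_univ_two, ha1, ha2, hb1, hb2]⟩
  one_mem' := ⟨by simp, 1, by simp⟩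
  algebraMap_mem' := fun c =>
    ⟨by simp [Matrix.algebraMap_matrix_apply], c, by simp [Matrix.algebraMap_matrix_apply]⟩

set_option synthInstance.maxHeartbeats 1000000
set_option maxHeartbeats 1000000
set_option maxSynthPendingDepth 5

/-- The generator `[[1, k], [0, 0]]` of the left ideal `I_k` (for `k : D`), and the
generator `[[0, 1], [0, 0]]` of `I_∞` (for `none`), as elements of `R = [[D,D],[0,C]]`. -/
def triGen (C D : Type*) [Field C] [Field D] [Algebra C D] : Option D → ↥(TriR C D)
  | none => ⟨!![0, 1; 0, 0], by simp, 0, by simp⟩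
  | some k => ⟨!![1, k; 0, 0], by simp, 0, by simp⟩

/-- The left ideal `I_λ = R·[[1, λ],[0,0]]` for `λ : D`, resp. `I_∞ = R·[[0,1],[0,0]]`. -/
def triI (C D : Type*) [Field C] [Field D] [Algebra C D] (lam : Option D) :
    Submodule ↥(TriR C D) ↥(TriR C D) :=
  Submodule.span ↥(TriR C D) {triGen C D lam}

/-!
Every generator `g` of an `I_λ` has zero bottom row, so `r * g = r₀₀ • g` for `r ∈ R`. Hence all
the generators have the same annihilator, the kernel of the surjective ring map `r ↦ r₀₀ : R → D`,
which is a maximal left ideal because `D` is a field. So each `I_λ ≅ R ⧸ ker` is simple, and they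
are all isomorphic. Finally `I_0 = R e` with `e = [[1, 0], [0, 0]]` idempotent is a direct summand
of `R`, hence projective, and so are the isomorphic `I_λ`.
-/

theorem Module.Projective.span_singleton_of_isIdempotentElem {R : Type*} [Ring R] {e : R}
    (he : IsIdempotentElem e) : Module.Projective R (R ∙ e) := by
  refine .of_split (R ∙ e).subtype ((LinearMap.toSpanSingleton R R e).codRestrict _
    fun r => Submodule.smul_mem _ r (Submodule.mem_span_singleton_self e)) ?_
  ext ⟨x, hx⟩
  obtain ⟨a, rfl⟩ := Submodule.mem_span_singleton.1 hx
  change a • e * e = a • e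
  rw [smul_eq_mul, mul_assoc, he.eq]

namespace TriR

variable (C D : Type*) [Field C] [Field D] [Algebra C D]

def topLeft : TriR C D →+* D where
  toFun r := (r : Matrix (Fin 2) (Fin 2) D) 0 0
  map_one' := rfl
  map_mul' r s := by simp [Matrix.mul_apply, Fin.sum_univ_two, s.2.1]
  map_zero' := rfl
  map_add' _ _ := rfl

@[simp]
theorem topLeft_apply (r : TriR C D) : topLeft C D r = (r : Matrix (Fin 2) (Fin 2) D) 0 0 := rfl

theorem topLeft_surjective : Function.Surjective (topLeft C D) :=
  fun d => ⟨⟨!![d, 0; 0, 0], by simp, 0, by simp⟩, rfl⟩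

theorem coe_smul_triGen (r : TriR C D) (lam : Option D) :
    ((r • triGen C D lam : TriR C D) : Matrix (Fin 2) (Fin 2) D) =
      topLeft C D r • (triGen C D lam : Matrix (Fin 2) (Fin 2) D) := by
  cases lam <;>
  · ext i j
    fin_cases i <;> fin_cases j <;>
      simp [triGen, smul_eq_mul, Matrix.mul_apply, Fin.sum_univ_two, r.2.1]

theorem coe_triGen_ne_zero (lam : Option D) :
    (triGen C D lam : Matrix (Fin 2) (Fin 2) D) ≠ 0 := by
  intro h
  cases lam
  · simpa [triGen] using congrFun (congrFun h 0) 1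
  · simpa [triGen] using congrFun (congrFun h 0) 0

theorem torsionOf_triGen (lam : Option D) :
    Ideal.torsionOf (TriR C D) (TriR C D) (triGen C D lam) = RingHom.ker (topLeft C D) := by
  ext r
  rw [Ideal.mem_torsionOf_iff, RingHom.mem_ker, ← Subtype.coe_inj, coe_smul_triGen,
    ZeroMemClass.coe_zero, smul_eq_zero, or_iff_left (coe_triGen_ne_zero C D lam)]

noncomputable def triIEquivQuotKerTopLeft (lam : Option D) :
    triI C D lam ≃ₗ[TriR C D] TriR C D ⧸ RingHom.ker (topLeft C D) :=
  (Ideal.quotTorsionOfEquivSpanSingleton _ _ (triGen C D lam)).symm ≪≫ₗ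
    Submodule.quotEquivOfEq _ _ (torsionOf_triGen C D lam)

theorem isSimpleModule_triI (lam : Option D) : IsSimpleModule (TriR C D) (triI C D lam) :=
  isSimpleModule_iff_quot_maximal.2 ⟨_, RingHom.ker_isMaximal_of_surjective _
    (topLeft_surjective C D), ⟨triIEquivQuotKerTopLeft C D lam⟩⟩

theorem isIdempotentElem_triGen_zero : IsIdempotentElem (triGen C D (some 0)) := by
  ext i j
  fin_cases i <;> fin_cases j <;> simp [triGen, Matrix.mul_apply, Fin.sum_univ_two]

theorem mem_triI_none (x : TriR C D) :
    x ∈ triI C D none ↔ ((x : Matrix (Fin 2) (Fin 2) D) 0 0 = 0 ∧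
      (x : Matrix (Fin 2) (Fin 2) D) 1 0 = 0 ∧ (x : Matrix (Fin 2) (Fin 2) D) 1 1 = 0) := by
  rw [triI, Submodule.mem_span_singleton]
  constructor
  · rintro ⟨r, rfl⟩
    rw [coe_smul_triGen]
    simp [triGen]
  · rintro ⟨h00, h10, h11⟩
    obtain ⟨r, hr⟩ := topLeft_surjective C D ((x : Matrix (Fin 2) (Fin 2) D) 0 1)
    refine ⟨r, Subtype.ext ?_⟩
    rw [coe_smul_triGen, hr]
    ext i j
    fin_cases i <;> fin_cases j <;> simp [triGen, h00, h10, h11]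

end TriR

/-- For every `λ ∈ D ∪ {∞}`, the left ideal `I_λ` is a simple projective `R`-module,
`I_∞ = [[0, D],[0, 0]]`, and all the `I_λ` are pairwise isomorphic as `R`-modules. -/
theorem triI_simple_projective_iso (C D : Type*) [Field C] [Field D] [Algebra C D] :
    (∀ x : ↥(TriR C D), x ∈ triI C D none ↔
      ((x : Matrix (Fin 2) (Fin 2) D) 0 0 = 0 ∧ (x : Matrix (Fin 2) (Fin 2) D) 1 0 = 0 ∧
        (x : Matrix (Fin 2) (Fin 2) D) 1 1 = 0)) ∧
    ∀ lam : Option D,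
      IsSimpleModule ↥(TriR C D) ↥(triI C D lam) ∧
      Module.Projective ↥(TriR C D) ↥(triI C D lam) ∧
      ∀ mu : Option D, Nonempty (↥(triI C D lam) ≃ₗ[↥(TriR C D)] ↥(triI C D mu)) := by
  let e := TriR.triIEquivQuotKerTopLeft C D
  have : Module.Projective (TriR C D) (triI C D (some 0)) :=
    .span_singleton_of_isIdempotentElem (TriR.isIdempotentElem_triGen_zero C D)
  exact ⟨TriR.mem_triI_none C D, fun lam => ⟨TriR.isSimpleModule_triI C D lam,
    .of_equiv (e (some 0) ≪≫ₗ (e lam).symm), fun mu => ⟨e lam ≪≫ₗ (e mu).symm⟩⟩⟩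
end

section
/- Let K be a field and let V be the K-vector space with basis v₀, v₁, v₂, …. Let A be the K-subalgebra of End_K(V) generated by the linear maps f₀, f₁, f₂, … where f₀(v_{n+1}) = vₙ for n ≥ 1, f₀(v₀) = f₀(v₁) = 0, and for i ≥ 1, fᵢ(v₀) = vᵢ and fᵢ(vⱼ) = 0 for j ≥ 1. Then V = A·v₀ is a cyclic A-module, f₁ is an A-module endomorphism of V with f₁² = 0, and End_A(V) ≅ K[x]/(x²). -/
/-!
All products `f₁ fᵢ` and `fᵢ f₁` vanish, so `f₁` commutes with `A` and `f₁² = 0`.  Since `fᵢ v₀ = vᵢ`,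
`V = A v₀`, so an `A`-endomorphism `g` is determined by `g v₀`, which lies in
`ker f₀ = span {v₀, v₁}` because `f₀ v₀ = 0`; hence `g = a + b f₁` for scalars `a, b`.  Thus
`K[X] → End_A V`, `X ↦ f₁`, is onto, and its kernel is generated by the minimal polynomial of the
nonzero square-zero element `f₁`, namely `X²`.
-/

open Polynomial

theorem minpoly_eq_X_sq_of_sq_eq_zero {K B : Type*} [Field K] [Ring B] [Algebra K B] {x : B}
    (hx₀ : x ≠ 0) (hx : x ^ 2 = 0) : minpoly K x = X ^ 2 := by
  have : Nontrivial B := nontrivial_of_ne x 0 hx₀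
  have hint : IsIntegral K x := ⟨X ^ 2, monic_X_pow 2, by simp [hx]⟩
  obtain ⟨i, hi, hassoc⟩ := (dvd_prime_pow prime_X 2).1 (minpoly.dvd K x (by simp [hx]))
  have hmin := eq_of_monic_of_associated (minpoly.monic hint) (monic_X_pow i) hassoc
  interval_cases i
  · exact absurd (hmin.trans (pow_zero X)) (minpoly.ne_one K x)
  · simpa [hmin, hx₀] using minpoly.aeval K x
  · exact hmin

theorem nonempty_algEquiv_quotient_X_sq {K B : Type*} [Field K] [Ring B] [Algebra K B] {x : B}
    (hx₀ : x ≠ 0) (hx : x ^ 2 = 0) (hsurj : Function.Surjective (aeval x : K[X] →ₐ[K] B)) :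
    Nonempty (B ≃ₐ[K] K[X] ⧸ Ideal.span {(X : K[X]) ^ 2}) := by
  have hker : RingHom.ker (aeval x : K[X] →ₐ[K] B) = Ideal.span {X ^ 2} := by
    rw [minpoly.ker_aeval_eq_span_minpoly, minpoly_eq_X_sq_of_sq_eq_zero hx₀ hx]
  exact ⟨((Ideal.quotientEquivAlgOfEq K hker).symm.trans
    (Ideal.quotientKerAlgEquivOfSurjective hsurj)).symm⟩

section

variable {K V : Type*} [Field K] [AddCommGroup V] [Module K V]

@[simps]
def Subalgebra.endOfCommute (A : Subalgebra K (Module.End K V)) (f : Module.End K V)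
    (hf : ∀ a ∈ A, Commute f a) : Module.End A V where
  toFun := f
  map_add' := f.map_add
  map_smul' a x := LinearMap.congr_fun (hf a a.2) x

structure IsOsofskyFamily (v : Module.Basis ℕ K V) (F : ℕ → Module.End K V) : Prop where
  zero_apply_zero : F 0 (v 0) = 0
  zero_apply_one : F 0 (v 1) = 0
  zero_apply_add_two (n : ℕ) : F 0 (v (n + 2)) = v (n + 1)
  succ_apply_zero (i : ℕ) : F (i + 1) (v 0) = v (i + 1)
  succ_apply_succ (i j : ℕ) : F (i + 1) (v (j + 1)) = 0

namespace IsOsofskyFamily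

variable {v : Module.Basis ℕ K V} {F : ℕ → Module.End K V} (hF : IsOsofskyFamily v F)
include hF

theorem succ_mul (j i : ℕ) : F (j + 1) * F i = 0 := by
  refine v.ext fun n => ?_
  match i, n with
  | 0, 0 => simp [hF.zero_apply_zero]
  | 0, 1 => simp [hF.zero_apply_one]
  | 0, n + 2 => simp [hF.zero_apply_add_two, hF.succ_apply_succ]
  | i + 1, 0 => simp [hF.succ_apply_zero, hF.succ_apply_succ]
  | i + 1, n + 1 => simp [hF.succ_apply_succ]

theorem zero_mul_one : F 0 * F 1 = 0 := by
  refine v.ext fun n => ?_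
  cases n with
  | zero => simp [hF.succ_apply_zero 0, hF.zero_apply_one]
  | succ n => simp [hF.succ_apply_succ 0]

theorem commute_one (i : ℕ) : Commute (F 1) (F i) := by
  cases i with
  | zero => exact (hF.succ_mul 0 0).trans hF.zero_mul_one.symm
  | succ i => exact (hF.succ_mul 0 (i + 1)).trans (hF.succ_mul i 1).symm

theorem span_singleton_eq_top {A : Subalgebra K (Module.End K V)} (hFA : ∀ i, F i ∈ A) :
    Submodule.span A {v 0} = ⊤ := by
  have hv : ∀ n, v n ∈ Submodule.span A {v 0}
    | 0 => Submodule.mem_span_singleton_self _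
    | n + 1 => hF.succ_apply_zero n ▸
        Submodule.smul_mem _ (⟨F (n + 1), hFA _⟩ : A) (Submodule.mem_span_singleton_self _)
  rw [← Submodule.restrictScalars_eq_top_iff K, eq_top_iff, ← v.span_eq, Submodule.span_le]
  rintro _ ⟨n, rfl⟩
  exact hv n

theorem coord_succ_comp_zero (n : ℕ) : v.coord (n + 1) ∘ₗ F 0 = v.coord (n + 2) := by
  refine v.ext fun m => ?_
  match m with
  | 0 => simp [hF.zero_apply_zero]
  | 1 => simp [hF.zero_apply_one]
  | m + 2 => simp [hF.zero_apply_add_two, Finsupp.single_apply]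

theorem eq_of_zero_apply_eq_zero {w : V} (hw : F 0 w = 0) :
    w = v.repr w 0 • v 0 + v.repr w 1 • v 1 := by
  refine v.repr.injective (Finsupp.ext fun n => ?_)
  match n with
  | 0 => simp
  | 1 => simp
  | n + 2 =>
    have : v.repr w (n + 2) = 0 := by
      rw [← v.coord_apply, ← hF.coord_succ_comp_zero, LinearMap.comp_apply, hw, map_zero]
    simp [this]

theorem commute_one_of_mem_adjoin {a : Module.End K V} (ha : a ∈ Algebra.adjoin K (Set.range F)) :
    Commute (F 1) a :=
  Algebra.commute_of_mem_adjoin_of_forall_mem_commute ha <| by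
    rintro _ ⟨i, rfl⟩
    exact hF.commute_one i

variable {A : Subalgebra K (Module.End K V)} (hFA : ∀ i, F i ∈ A) (hcomm : ∀ a ∈ A, Commute (F 1) a)

theorem endOfCommute_ne_zero : A.endOfCommute (F 1) hcomm ≠ 0 := by
  intro h
  simpa [hF.succ_apply_zero 0, v.ne_zero] using LinearMap.congr_fun h (v 0)

theorem endOfCommute_sq : A.endOfCommute (F 1) hcomm ^ 2 = 0 :=
  LinearMap.ext fun x => LinearMap.congr_fun (hF.succ_mul 0 1) x

include hFA in
theorem aeval_endOfCommute_surjective :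
    Function.Surjective (aeval (A.endOfCommute (F 1) hcomm) : K[X] →ₐ[K] Module.End A V) := by
  intro g
  have hg : F 0 (g (v 0)) = 0 := by
    have := g.map_smul (⟨F 0, hFA 0⟩ : A) (v 0)
    change g (F 0 (v 0)) = F 0 (g (v 0)) at this
    rw [← this, hF.zero_apply_zero, map_zero]
  refine ⟨C (v.repr (g (v 0)) 0) + C (v.repr (g (v 0)) 1) * X, ?_⟩
  refine LinearMap.ext_on (hF.span_singleton_eq_top hFA) ?_
  rintro _ rfl
  conv_rhs => rw [hF.eq_of_zero_apply_eq_zero hg]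
  simp [hF.succ_apply_zero 0]

end IsOsofskyFamily

end

/-- Osofsky's example: `V` is the `K`-vector space with basis `v₀, v₁, v₂, …` and `A` is the
`K`-subalgebra of `End_K(V)` generated by the maps `f₀, f₁, f₂, …` with
`f₀(v_{n+1}) = vₙ` for `n ≥ 1`, `f₀(v₀) = f₀(v₁) = 0`, and `fᵢ(v₀) = vᵢ`, `fᵢ(vⱼ) = 0`
for `i ≥ 1`, `j ≥ 1`.  Then `V = A·v₀` is cyclic, `f₁` is an `A`-module endomorphism of `V`
with `f₁² = 0`, and `End_A(V) ≅ K[x]/(x²)`. -/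
theorem osofsky_endomorphism_ring
    {K V : Type*} [Field K] [AddCommGroup V] [Module K V]
    (v : Module.Basis ℕ K V) (F : ℕ → Module.End K V)
    (hF0 : ∀ n : ℕ, 1 ≤ n → F 0 (v (n + 1)) = v n)
    (hF00 : F 0 (v 0) = 0) (hF01 : F 0 (v 1) = 0)
    (hFi0 : ∀ i : ℕ, 1 ≤ i → F i (v 0) = v i)
    (hFij : ∀ i j : ℕ, 1 ≤ i → 1 ≤ j → F i (v j) = 0)
    (A : Subalgebra K (Module.End K V)) (hA : A = Algebra.adjoin K (Set.range F)) :
    Submodule.span ↥A {v 0} = ⊤ ∧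
    (∀ a : ↥A, ∀ x : V, F 1 ((a : Module.End K V) x) = (a : Module.End K V) (F 1 x)) ∧
    F 1 ∘ₗ F 1 = 0 ∧
    Nonempty (Module.End ↥A V ≃+* (Polynomial K ⧸ Ideal.span {(Polynomial.X : Polynomial K) ^ 2})) := by
  have hF : IsOsofskyFamily v F :=
    ⟨hF00, hF01, fun n => hF0 (n + 1) n.succ_pos, fun i => hFi0 (i + 1) i.succ_pos,
      fun i j => hFij (i + 1) (j + 1) i.succ_pos j.succ_pos⟩
  have hFA : ∀ i, F i ∈ A := fun i => hA ▸ Algebra.subset_adjoin ⟨i, rfl⟩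
  have hcomm : ∀ a ∈ A, Commute (F 1) a := fun a ha => hF.commute_one_of_mem_adjoin (hA ▸ ha)
  obtain ⟨e⟩ := nonempty_algEquiv_quotient_X_sq (hF.endOfCommute_ne_zero hcomm)
    (hF.endOfCommute_sq hcomm) (hF.aeval_endOfCommute_surjective hFA hcomm)
  exact ⟨hF.span_singleton_eq_top hFA, fun a => LinearMap.congr_fun (hcomm a a.2),
    hF.succ_mul 0 1, ⟨e.toRingEquiv⟩⟩
end

section
/- Let R be a ring and let L, M be uniform R-modules of finite length n. If L ≇ M, then for any alternating sequence of n homomorphisms f₁: L → M, f₂: M → L, …, the image of the composite f_k ∘ ⋯ ∘ f₁ has length at most n − k for each 1 ≤ k ≤ n; in particular fₙ ∘ ⋯ ∘ f₁ = 0. -/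
/-- A module has (composition) length at most `n`. -/
def LengthLE (R M : Type*) [Ring R] [AddCommGroup M] [Module R M] (n : ℕ) : Prop :=
  ∃ m ≤ n, HasLength R M m

open Module Function LinearMap

section Length

variable {R A B : Type*} [Ring R] [AddCommGroup A] [Module R A] [AddCommGroup B] [Module R B]

theorem hasLength_iff_length_eq {n : ℕ} : HasLength R A n ↔ length R A = n := by
  refine ⟨fun ⟨s, hhead, hlast, hlen⟩ => hlen ▸ (length_compositionSeries s hhead hlast).symm,
    fun h => ?_⟩
  obtain ⟨s, hhead, hlast⟩ := isFiniteLength_iff_exists_compositionSeries.mp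
    (length_ne_top_iff.mp (h ▸ ENat.natCast_ne_top n))
  exact ⟨s, hhead, hlast, by exact_mod_cast (length_compositionSeries s hhead hlast).trans h⟩

theorem lengthLE_iff {n : ℕ} : LengthLE R A n ↔ length R A ≤ n := by
  refine ⟨fun ⟨m, hmn, hm⟩ => hasLength_iff_length_eq.mp hm ▸ by exact_mod_cast hmn,
    fun h => ?_⟩
  obtain ⟨m, hm⟩ := ENat.ne_top_iff_exists.mp (ne_top_of_le_ne_top (ENat.natCast_ne_top n) h)
  exact ⟨m, by exact_mod_cast hm ▸ h, hasLength_iff_length_eq.mpr hm.symm⟩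

theorem LinearMap.length_range_eq_zero_iff {f : A →ₗ[R] B} : length R (range f) = 0 ↔ f = 0 := by
  rw [length_eq_zero_iff, Submodule.subsingleton_iff_eq_bot, range_eq_bot]

theorem LinearMap.surjective_of_injective_of_length_eq_s19 {f : A →ₗ[R] B}
    (hlen : length R A = length R B) (hfin : length R B ≠ ⊤) (hf : Injective f) :
    Surjective f := by
  have hsum := length_eq_add_of_exact (R := R) f (range f).mkQ hf (Submodule.mkQ_surjective _)
    (exact_map_mkQ_range f)
  rw [hlen] at hsum
  have hquot : length R (B ⧸ range f) = 0 :=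
    (WithTop.add_left_inj hfin).mp (hsum.symm.trans (add_zero _).symm)
  rw [← range_eq_top, ← Submodule.Quotient.subsingleton_iff]
  exact length_eq_zero_iff.mp hquot

theorem LinearMap.not_injective_of_length_eq (f : A →ₗ[R] B) (hlen : length R A = length R B)
    (hfin : length R B ≠ ⊤) (hniso : ¬ Nonempty (A ≃ₗ[R] B)) : ¬ Injective f :=
  fun hf => hniso ⟨.ofBijective f ⟨hf, surjective_of_injective_of_length_eq_s19 hlen hfin hf⟩⟩

theorem IsUniformModule.length_map_le_length_sub_one (hA : IsUniformModule R A)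
    {f : A →ₗ[R] B} (hf : ¬ Injective f) (N : Submodule R A) :
    length R (N.map f) ≤ length R N - 1 := by
  rcases eq_or_ne N ⊥ with rfl | hN
  · rw [Submodule.map_bot, length_bot]
    exact zero_le
  have hker : ker (f.submoduleMap N) ≠ ⊥ := by
    rw [ker_submoduleMap, Ne, ← Submodule.disjoint_iff_comap_eq_bot, disjoint_iff]
    exact hA N (ker f) hN (by rwa [Ne, ker_eq_bot])
  have hpos : 1 ≤ length R (ker (f.submoduleMap N)) := by
    rw [Order.one_le_iff_pos, length_pos_iff, Submodule.nontrivial_iff_ne_bot]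
    exact hker
  have hsum := length_eq_add_of_exact _ _ (Submodule.subtype_injective _)
    (submoduleMap_surjective f N) (exact_subtype_ker_map (f.submoduleMap N))
  refine ENat.le_sub_of_add_le_right ENat.one_ne_top ?_
  rw [hsum, add_comm]
  gcongr

end Length

section Alternating

variable {R L M : Type*} [Ring R] [AddCommGroup L] [Module R L] [AddCommGroup M] [Module R M]
  (u : ℕ → L →ₗ[R] M) (v : ℕ → M →ₗ[R] L)

theorem altComp_succ (k : ℕ) :
    altComp u v (k + 1) =
      (altComp u v k).elim (fun h => .inr ((u k).comp h)) (fun h => .inl ((v k).comp h)) := by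
  rw [altComp]
  cases altComp u v k <;> rfl

theorem length_range_altComp_le (hL : IsUniformModule R L) (hM : IsUniformModule R M)
    (hu : ∀ k, ¬ Injective (u k)) (hv : ∀ k, ¬ Injective (v k)) (k : ℕ) :
    (altComp u v k).elim (fun h => length R (range h) ≤ length R L - k)
      (fun h => length R (range h) ≤ length R L - k) := by
  induction k with
  | zero =>
    show length R (range (LinearMap.id : L →ₗ[R] L)) ≤ length R L - 0
    rw [range_id, length_top, tsub_zero]
  | succ k ih =>
    rw [altComp_succ, Nat.cast_succ, ← tsub_tsub]
    generalize altComp u v k = x at ih ⊢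
    rcases x with h | h <;> simp only [Sum.elim_inl, Sum.elim_inr] at ih ⊢ <;> rw [range_comp]
    · exact (hL.length_map_le_length_sub_one (hu k) _).trans (tsub_le_tsub_right ih 1)
    · exact (hM.length_map_le_length_sub_one (hv k) _).trans (tsub_le_tsub_right ih 1)

end Alternating

theorem alternating_comp_eq_zero_of_not_iso
    {R L M : Type*} [Ring R] [AddCommGroup L] [Module R L] [AddCommGroup M] [Module R M]
    (n : ℕ) (hLlen : HasLength R L n) (hMlen : HasLength R M n)
    (hL : IsUniformModule R L) (hM : IsUniformModule R M)
    (hniso : ¬ Nonempty (L ≃ₗ[R] M))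
    (u : ℕ → (L →ₗ[R] M)) (v : ℕ → (M →ₗ[R] L)) :
    (∀ k, 1 ≤ k → k ≤ n →
      (altComp u v k).elim (fun h => LengthLE R ↥(LinearMap.range h) (n - k))
        (fun h => LengthLE R ↥(LinearMap.range h) (n - k))) ∧
    (altComp u v n).elim (· = 0) (· = 0) := by
  rw [hasLength_iff_length_eq] at hLlen hMlen
  have hlen : length R L = length R M := hLlen.trans hMlen.symm
  have hfin : length R L ≠ ⊤ := hLlen ▸ ENat.natCast_ne_top n
  have hbound := length_range_altComp_le u v hL hM
    (fun k => (u k).not_injective_of_length_eq hlen (hlen ▸ hfin) hniso)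
    (fun k => (v k).not_injective_of_length_eq hlen.symm hfin fun ⟨e⟩ => hniso ⟨e.symm⟩)
  rw [hLlen] at hbound
  refine ⟨fun k _ _ => ?_, ?_⟩
  · have := hbound k
    generalize altComp u v k = x at this ⊢
    rcases x with h | h <;> simpa [lengthLE_iff, ENat.natCast_sub] using this
  · have := hbound n
    generalize altComp u v n = x at this ⊢
    rcases x with h | h <;> simpa [length_range_eq_zero_iff] using this
end
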